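/- arXiv:2506.22565 — 2 statements merged into one kernel-verified Lean document; each statement's English description precedes it below -/
import Mathlib

section
/- Let d be a positive integer, let μ, ν : ℝ^d → [0,∞) be probability densities with respect to Lebesgue measure, and let k : ℝ^d × ℝ^d → [0,∞) be a measurable function, written k(x₁, x₀), with ∫ k(x₁, x₀) dx₁ = 1 for every x₀. Let φ₀, φ̂₀, φ₁, φ̂₁ : ℝ^d → (0,∞) be measurable functions solving the Schrödinger system: φ₀(x) = ∫ k(y, x) φ₁(y) dy for all x, φ̂₁(x) = ∫ k(x, y) φ̂₀(y) dy for all x, φ₀(x)·φ̂₀(x) = μ(x) for all x, and φ₁(x)·φ̂₁(x) = ν(x) for all x. Define the optimal joint density p*(x₀, x₁) := μ(x₀) · k(x₁, x₀) · exp(−log(φ̂₁(x₁)/ν(x₁)) − log φ₀(x₀)). Then for every x₁ ∈ ℝ^d, ∫ p*(x₀, x₁) dx₀ = ν(x₁); i.e., the terminal marginal of the optimal distribution equals the target distribution ν. -/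
open MeasureTheory Real

/-! Writing `μ = φ₀ φ̂₀` and `ν = φ₁ φ̂₁`, the exponential factor of `p*` is `φ₁(x₁) / φ₀(x₀)`, so
`p*(x₀, x₁) = φ₁(x₁) k(x₁, x₀) φ̂₀(x₀)`; integrating in `x₀` and using the equation for `φ̂₁` leaves
`φ₁(x₁) φ̂₁(x₁) = ν(x₁)`. -/

lemma exp_neg_log_div_sub_log {a b c : ℝ} (ha : 0 < a) (hb : 0 < b) (hc : 0 < c) :
    exp (-log (a / b) - log c) = b / a / c := by
  rw [sub_eq_add_neg, exp_add, exp_neg, exp_neg, exp_log (div_pos ha hb), exp_log hc, inv_div,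
    ← div_eq_mul_inv]

lemma schrodinger_density_eq {f₀ g₀ f₁ g₁ k : ℝ} (hf₀ : 0 < f₀) (hf₁ : 0 < f₁) (hg₁ : 0 < g₁) :
    f₀ * g₀ * k * exp (-log (g₁ / (f₁ * g₁)) - log f₀) = f₁ * (k * g₀) := by
  rw [exp_neg_log_div_sub_log hg₁ (mul_pos hf₁ hg₁) hf₀]
  field_simp

theorem integral_schrodinger_density_eq {α : Type*} [MeasurableSpace α] (m : Measure α)
    (k : α → α → ℝ) (φ₀ ψ₀ φ₁ ψ₁ : α → ℝ)
    (hφ₀_pos : ∀ x, 0 < φ₀ x) (hφ₁_pos : ∀ x, 0 < φ₁ x) (hψ₁_pos : ∀ x, 0 < ψ₁ x)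
    (hψ₁_eq : ∀ x, ψ₁ x = ∫ y, k x y * ψ₀ y ∂m) (x₁ : α) :
    ∫ x₀, φ₀ x₀ * ψ₀ x₀ * k x₁ x₀ * exp (-log (ψ₁ x₁ / (φ₁ x₁ * ψ₁ x₁)) - log (φ₀ x₀)) ∂m
      = φ₁ x₁ * ψ₁ x₁ := by
  simp_rw [schrodinger_density_eq (hφ₀_pos _) (hφ₁_pos x₁) (hψ₁_pos x₁)]
  rw [integral_const_mul, ← hψ₁_eq]

theorem sb_terminal_marginal_is_target_general
    (d : ℕ)
    (μ ν : EuclideanSpace ℝ (Fin d) → ℝ)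
    (k : EuclideanSpace ℝ (Fin d) → EuclideanSpace ℝ (Fin d) → ℝ)
    (φ₀ ψ₀ φ₁ ψ₁ : EuclideanSpace ℝ (Fin d) → ℝ)
    (hφ₀_pos : ∀ x, 0 < φ₀ x)
    (hφ₁_pos : ∀ x, 0 < φ₁ x) (hψ₁_pos : ∀ x, 0 < ψ₁ x)
    (hψ₁_eq : ∀ x, ψ₁ x = ∫ y, k x y * ψ₀ y)
    (hμ_couple : ∀ x, φ₀ x * ψ₀ x = μ x)
    (hν_couple : ∀ x, φ₁ x * ψ₁ x = ν x)
    (pstar : EuclideanSpace ℝ (Fin d) → EuclideanSpace ℝ (Fin d) → ℝ)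
    (hpstar : ∀ x₀ x₁, pstar x₀ x₁
      = μ x₀ * k x₁ x₀ * Real.exp (-Real.log (ψ₁ x₁ / ν x₁) - Real.log (φ₀ x₀))) :
    ∀ x₁, (∫ x₀, pstar x₀ x₁) = ν x₁ := by
  intro x₁
  simp only [hpstar, ← hμ_couple, ← hν_couple]
  exact integral_schrodinger_density_eq volume k φ₀ ψ₀ φ₁ ψ₁ hφ₀_pos hφ₁_pos hψ₁_pos hψ₁_eq x₁

/-- **The debiasing identity (equation (7)).**
Given a Schrödinger system `(φ₀, ψ₀, φ₁, ψ₁)` (with `ψ = φ̂`) between a source density `μ`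
and a target density `ν` for a base transition density `k`, the terminal marginal of the
optimal joint density `p*(x₀, x₁) = μ(x₀) k(x₁, x₀) exp(−log(φ̂₁(x₁)/ν(x₁)) − log φ₀(x₀))`
equals the target `ν`. -/
theorem sb_terminal_marginal_is_target
    (d : ℕ) (hd : 0 < d)
    (μ ν : EuclideanSpace ℝ (Fin d) → ℝ)
    (hμ_meas : Measurable μ) (hν_meas : Measurable ν)
    (hμ_nonneg : ∀ x, 0 ≤ μ x) (hν_nonneg : ∀ x, 0 ≤ ν x)
    (hμ_prob : (∫ x, μ x) = 1) (hν_prob : (∫ x, ν x) = 1)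
    (k : EuclideanSpace ℝ (Fin d) → EuclideanSpace ℝ (Fin d) → ℝ)
    (hk_meas : Measurable (Function.uncurry k))
    (hk_nonneg : ∀ x₁ x₀, 0 ≤ k x₁ x₀)
    (hk_prob : ∀ x₀, (∫ x₁, k x₁ x₀) = 1)
    (φ₀ ψ₀ φ₁ ψ₁ : EuclideanSpace ℝ (Fin d) → ℝ)
    (hφ₀_meas : Measurable φ₀) (hψ₀_meas : Measurable ψ₀)
    (hφ₁_meas : Measurable φ₁) (hψ₁_meas : Measurable ψ₁)
    (hφ₀_pos : ∀ x, 0 < φ₀ x) (hψ₀_pos : ∀ x, 0 < ψ₀ x)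
    (hφ₁_pos : ∀ x, 0 < φ₁ x) (hψ₁_pos : ∀ x, 0 < ψ₁ x)
    (hφ₀_eq : ∀ x, φ₀ x = ∫ y, k y x * φ₁ y)
    (hψ₁_eq : ∀ x, ψ₁ x = ∫ y, k x y * ψ₀ y)
    (hμ_couple : ∀ x, φ₀ x * ψ₀ x = μ x)
    (hν_couple : ∀ x, φ₁ x * ψ₁ x = ν x)
    (pstar : EuclideanSpace ℝ (Fin d) → EuclideanSpace ℝ (Fin d) → ℝ)
    (hpstar : ∀ x₀ x₁, pstar x₀ x₁
      = μ x₀ * k x₁ x₀ * Real.exp (-Real.log (ψ₁ x₁ / ν x₁) - Real.log (φ₀ x₀))) :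
    ∀ x₁, (∫ x₀, pstar x₀ x₁) = ν x₁ :=
  sb_terminal_marginal_is_target_general d μ ν k φ₀ ψ₀ φ₁ ψ₁ hφ₀_pos hφ₁_pos hψ₁_pos hψ₁_eq
    hμ_couple hν_couple pstar hpstar
end

section
/- Let d be a positive integer, μ : ℝ^d → [0,∞) a probability density, and k_{t|0}, k_{1|t}, k_{1|0} : ℝ^d × ℝ^d → [0,∞) measurable transition densities (with k(y, x) the density of landing at y given start at x) satisfying the Chapman–Kolmogorov relation k_{1|0}(z, x) = ∫ k_{1|t}(z, y) k_{t|0}(y, x) dy for all x, z. Let g : ℝ^d → ℝ be measurable such that Z(x) := ∫ k_{1|0}(z, x) e^{−g(z)} dz ∈ (0,∞) for every x, and set the initial value function V₀(x) := −log Z(x). Assume also W(x) := ∫ k_{1|t}(x₁, x) e^{−g(x₁)} dx₁ ∈ (0,∞) for every x and set V_t(x) := −log W(x). Define the time-t marginal of the optimally controlled distribution p*_t(x) := ∫∫ μ(x₀) k_{t|0}(x, x₀) k_{1|t}(x₁, x) e^{−g(x₁) + V₀(x₀)} dx₀ dx₁. Then the function φ̂_t(x) := e^{V_t(x)} · p*_t(x)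 satisfies φ̂_t(x) = ∫ k_{t|0}(x, y) μ(y) e^{V₀(y)} dy for every x. -/
open MeasureTheory

/-- **SB characteristics of SOC (core computation of Theorem B.3).**
Under the transform `φ̂ₜ := e^{Vₜ} p*ₜ`, the time-`t` marginal of the optimally
controlled distribution of the SOC problem with terminal cost `g` satisfies the forward
Schrödinger potential equation `φ̂ₜ(x) = ∫ k_{t|0}(x, y) μ(y) e^{V₀(y)} dy`. -/
theorem soc_marginal_satisfies_forward_potential_equation
    (d : ℕ) (hd : 0 < d)
    (μ : EuclideanSpace ℝ (Fin d) → ℝ)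
    (hμ_meas : Measurable μ) (hμ_nonneg : ∀ x, 0 ≤ μ x) (hμ_prob : (∫ x, μ x) = 1)
    (kt0 k1t k10 : EuclideanSpace ℝ (Fin d) → EuclideanSpace ℝ (Fin d) → ℝ)
    (hkt0_meas : Measurable (Function.uncurry kt0))
    (hk1t_meas : Measurable (Function.uncurry k1t))
    (hk10_meas : Measurable (Function.uncurry k10))
    (hkt0_nonneg : ∀ y x, 0 ≤ kt0 y x)
    (hk1t_nonneg : ∀ y x, 0 ≤ k1t y x)
    (hk10_nonneg : ∀ y x, 0 ≤ k10 y x)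
    (hCK : ∀ x z, k10 z x = ∫ y, k1t z y * kt0 y x)
    (g : EuclideanSpace ℝ (Fin d) → ℝ) (hg_meas : Measurable g)
    (Z : EuclideanSpace ℝ (Fin d) → ℝ)
    (hZ : ∀ x, Z x = ∫ z, k10 z x * Real.exp (-g z))
    (hZ_int : ∀ x, Integrable fun z => k10 z x * Real.exp (-g z))
    (hZ_pos : ∀ x, 0 < Z x)
    (V₀ : EuclideanSpace ℝ (Fin d) → ℝ) (hV₀ : ∀ x, V₀ x = -Real.log (Z x))
    (W : EuclideanSpace ℝ (Fin d) → ℝ)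
    (hW : ∀ x, W x = ∫ x₁, k1t x₁ x * Real.exp (-g x₁))
    (hW_int : ∀ x, Integrable fun x₁ => k1t x₁ x * Real.exp (-g x₁))
    (hW_pos : ∀ x, 0 < W x)
    (Vt : EuclideanSpace ℝ (Fin d) → ℝ) (hVt : ∀ x, Vt x = -Real.log (W x))
    (pt : EuclideanSpace ℝ (Fin d) → ℝ)
    (hpt : ∀ x, pt x
      = ∫ x₁, ∫ x₀, μ x₀ * kt0 x x₀ * k1t x₁ x * Real.exp (-g x₁ + V₀ x₀)) :
    ∀ x, Real.exp (Vt x) * pt x = ∫ y, kt0 x y * (μ y * Real.exp (V₀ y)) := by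
  intro x
  have hC : pt x = W x * ∫ y, kt0 x y * (μ y * Real.exp (V₀ y)) := by
    rw [hpt, hW, ← integral_mul_const]
    refine integral_congr_ae (Filter.Eventually.of_forall fun x₁ => ?_)
    dsimp only
    rw [← integral_const_mul]
    refine integral_congr_ae (Filter.Eventually.of_forall fun x₀ => ?_)
    dsimp only
    rw [Real.exp_add]
    ring
  rw [hC, hVt, Real.exp_neg, Real.exp_log (hW_pos x), ← mul_assoc,
    inv_mul_cancel₀ (hW_pos x).ne', one_mul]
end
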